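/- For every complete bipartite graph K_{m,n} with m ≥ n ≥ 1, str(K_{m,n}) = 2(m+n) - m = m + 2n. -/

import Mathlib

open SimpleGraph Finset

/-- `strf G f` is the maximum edge label `f(u)+f(v)` for the numbering given by the
equivalence `f` (vertex `v` receives label `(f v : ℕ) + 1 ∈ {1,…,n}`). -/
noncomputable def strf {V : Type*} [Fintype V] (G : SimpleGraph V)
    (f : V ≃ Fin (Fintype.card V)) : ℕ :=
  sSup {s | ∃ u v, G.Adj u v ∧ s = ((f u : ℕ) + 1) + ((f v : ℕ) + 1)}

/-- The strength of a graph: minimum over numberings of the maximum edge label. -/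
noncomputable def strength {V : Type*} [Fintype V] (G : SimpleGraph V) : ℕ :=
  sInf {s | ∃ f : V ≃ Fin (Fintype.card V), s = strf G f}

/-- The independence number of a graph. -/
noncomputable def indepNum {V : Type*} [Fintype V] (G : SimpleGraph V) : ℕ :=
  sSup {k | ∃ s : Finset V, (s : Set V).Pairwise (fun u v => ¬ G.Adj u v) ∧ s.card = k}

/-!
The vertex numbered `N` has at least `δ(G)` neighbours, which carry distinct numbers, so
one of them is numbered at least `δ(G)`; hence every numbering has an edge of label `≥ N + δ(G)`.
Conversely, numbering an independent set `S` last makes every edge meet a vertex numbered at most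
`N - |S|`, so no edge label exceeds `2N - |S|`. In `K_{m,n}` with `m ≥ n` we have `δ = n` and
the side of size `m` is independent, so both bounds equal `m + 2n`.
-/

lemma exists_mem_card_le_add_one_of_injOn {α : Type*} {s : Finset α} (hs : s.Nonempty)
    {g : α → ℕ} (hg : Set.InjOn g s) : ∃ a ∈ s, #s ≤ g a + 1 := by
  by_contra! h
  have himage : s.image g ⊆ range (#s - 1) := by
    intro x hx
    obtain ⟨a, ha, rfl⟩ := mem_image.1 hx
    have := h a ha
    exact mem_range.2 (by omega)
  have := card_le_card himage
  rw [card_image_of_injOn hg, card_range] at this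
  have := hs.card_pos
  omega

lemma exists_numbering_lt_of_notMem {V : Type*} [Fintype V] (s : Finset V) :
    ∃ f : V ≃ Fin (Fintype.card V), ∀ v ∉ s, (f v : ℕ) < Fintype.card V - #s := by
  classical
  have hcard : Fintype.card {v // v ∉ s} + Fintype.card {v // ¬v ∉ s} = Fintype.card V := by
    rw [← Fintype.card_sum]; exact Fintype.card_congr (Equiv.sumCompl _)
  refine ⟨(Equiv.sumCompl fun v => v ∉ s).symm.trans <|
    ((Fintype.equivFin _).sumCongr (Fintype.equivFin _)).trans <|
    finSumFinEquiv.trans (finCongr hcard), fun v hv => ?_⟩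
  simp only [Equiv.trans_apply, Equiv.sumCompl_symm_apply_of_pos (p := fun v => v ∉ s) hv,
    Equiv.sumCongr_apply, Sum.map_inl, finSumFinEquiv_apply_left, finCongr_apply, Fin.val_cast,
    Fin.val_castAdd]
  have hcompl : Fintype.card {v // v ∉ s} = Fintype.card V - #s := by simp
  exact hcompl ▸ Fin.isLt _

section Strength

variable {V : Type*} [Fintype V] {G : SimpleGraph V}

lemma strf_le {f : V ≃ Fin (Fintype.card V)} {s : ℕ}
    (h : ∀ u v, G.Adj u v → (f u : ℕ) + 1 + ((f v : ℕ) + 1) ≤ s) : strf G f ≤ s :=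
  csSup_le' <| by rintro _ ⟨u, v, huv, rfl⟩; exact h u v huv

lemma le_strf (f : V ≃ Fin (Fintype.card V)) {u v : V} (huv : G.Adj u v) :
    (f u : ℕ) + 1 + ((f v : ℕ) + 1) ≤ strf G f := by
  refine le_csSup ⟨2 * Fintype.card V, ?_⟩ ⟨u, v, huv, rfl⟩
  rintro _ ⟨u, v, -, rfl⟩
  have := (f u).isLt
  have := (f v).isLt
  omega

lemma strength_le_strf (f : V ≃ Fin (Fintype.card V)) : strength G ≤ strf G f :=
  Nat.sInf_le ⟨f, rfl⟩

lemma le_strength {s : ℕ} (h : ∀ f : V ≃ Fin (Fintype.card V), s ≤ strf G f) :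
    s ≤ strength G :=
  le_csInf ⟨_, Fintype.equivFin V, rfl⟩ <| by rintro _ ⟨f, rfl⟩; exact h f

lemma card_add_minDegree_le_strf [DecidableRel G.Adj] (hδ : 0 < G.minDegree)
    (f : V ≃ Fin (Fintype.card V)) : Fintype.card V + G.minDegree ≤ strf G f := by
  have hV : 0 < Fintype.card V := by
    by_contra h
    have : IsEmpty V := Fintype.card_eq_zero_iff.1 (by omega)
    simp [minDegree_of_subsingleton] at hδ
  set v := f.symm ⟨Fintype.card V - 1, by omega⟩
  have hv : (f v : ℕ) = Fintype.card V - 1 := by simp [v]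
  have hdeg := G.minDegree_le_degree v
  have hnonempty : (G.neighborFinset v).Nonempty := by
    rw [← card_pos, card_neighborFinset_eq_degree]; omega
  obtain ⟨w, hw, hlarge⟩ := exists_mem_card_le_add_one_of_injOn hnonempty (g := fun w => (f w : ℕ))
    fun a _ b _ hab => f.injective (Fin.val_injective hab)
  rw [card_neighborFinset_eq_degree] at hlarge
  calc Fintype.card V + G.minDegree ≤ (f v : ℕ) + 1 + ((f w : ℕ) + 1) := by omega
    _ ≤ strf G f := le_strf f ((G.mem_neighborFinset v w).1 hw)

lemma card_add_minDegree_le_strength [DecidableRel G.Adj] (hδ : 0 < G.minDegree) :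
    Fintype.card V + G.minDegree ≤ strength G :=
  le_strength (card_add_minDegree_le_strf hδ)

lemma strength_le_of_isIndepSet {s : Finset V} (hs : G.IsIndepSet (s : Set V)) :
    strength G ≤ 2 * Fintype.card V - #s := by
  obtain ⟨f, hf⟩ := exists_numbering_lt_of_notMem s
  have hsV := card_le_univ s
  refine (strength_le_strf f).trans (strf_le fun u v huv => ?_)
  have := (f u).isLt
  have := (f v).isLt
  by_cases hu : u ∈ s
  · have hv : v ∉ s := fun hv => hs hu hv huv.ne huv
    have := hf v hv
    omega
  · have := hf u hu
    omega

end Strength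

lemma completeBipartiteGraph_degree_inl {α β : Type*} [Fintype β] (a : α)
    [Fintype ((completeBipartiteGraph α β).neighborSet (Sum.inl a))] :
    (completeBipartiteGraph α β).degree (Sum.inl a) = Fintype.card β := by
  have : (completeBipartiteGraph α β).neighborFinset (Sum.inl a) = univ.map .inr := by
    ext (x | x) <;> simp
  rw [← card_neighborFinset_eq_degree, this, card_map, card_univ]

lemma completeBipartiteGraph_degree_inr {α β : Type*} [Fintype α] (b : β)
    [Fintype ((completeBipartiteGraph α β).neighborSet (Sum.inr b))] :
    (completeBipartiteGraph α β).degree (Sum.inr b) = Fintype.card α := by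
  have : (completeBipartiteGraph α β).neighborFinset (Sum.inr b) = univ.map .inl := by
    ext (x | x) <;> simp
  rw [← card_neighborFinset_eq_degree, this, card_map, card_univ]

lemma completeBipartiteGraph_isIndepSet_map_inl {α β : Type*} [Fintype α] :
    (completeBipartiteGraph α β).IsIndepSet (univ.map .inl : Finset (α ⊕ β)) := by
  rintro _ hu _ hv -
  simp only [coe_map, coe_univ, Set.image_univ, Set.mem_range] at hu hv
  obtain ⟨a, rfl⟩ := hu
  obtain ⟨b, rfl⟩ := hv
  simp

theorem strength_completeBipartite (m n : ℕ) (hn : 1 ≤ n) (hmn : n ≤ m) :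
    strength (completeBipartiteGraph (Fin m) (Fin n)) = m + 2 * n := by
  classical
  have hδ : n ≤ (completeBipartiteGraph (Fin m) (Fin n)).minDegree := by
    have : Nonempty (Fin m ⊕ Fin n) := ⟨.inr ⟨0, hn⟩⟩
    refine le_minDegree_of_forall_le_degree _ n fun v => ?_
    rcases v with a | b
    · simp [completeBipartiteGraph_degree_inl]
    · simpa [completeBipartiteGraph_degree_inr]
  have hupper := strength_le_of_isIndepSet
    (completeBipartiteGraph_isIndepSet_map_inl (α := Fin m) (β := Fin n))
  have hlower := card_add_minDegree_le_strength (lt_of_lt_of_le hn hδ)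
  simp only [card_map, card_univ, Fintype.card_sum, Fintype.card_fin] at hupper hlower
  omega
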